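/- Let d be a positive integer, B = (d² + 3d)/2, and let φ : S^{d−1} → ℝ^B map x = (x₁,…,x_d) to (x₁²,…,x_d², x₁x₂,…,x_{d−1}x_d, x₁,…,x_d) (all squares, all products of distinct coordinates, and all coordinates). Then the affine span of the image φ(S^{d−1}) is exactly the hyperplane {ξ ∈ ℝ^B : ξ₁ + ⋯ + ξ_d = 1}, where ξ₁,…,ξ_d are the coordinates corresponding to the squares x₁²,…,x_d². -/

import Mathlib

/-!
Every point of `φ(S^{d-1})` has square coordinates summing to `1`, so its affine span lies in the
hyperplane. Conversely, the direction of the span contains each coordinate vector outside the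
square block and each difference of two square coordinate vectors, and these span the kernel of
`ξ ↦ ξ₁ + ⋯ + ξ_d`: `φ(eᵢ) - φ(-eᵢ)` is twice a linear coordinate vector, `φ(eᵢ) - φ(eⱼ)` is a
difference of square coordinate vectors up to linear ones, and the sphere points
`(3/5) eᵢ ± (4/5) eⱼ` have `φ`-images differing only in the coordinates `xᵢxⱼ` and `xⱼ`.
-/

/-- Index type for the coordinates of `ℝ^B`, `B = (d² + 3d)/2`: one coordinate
for each square `xᵢ²`, one for each product `xᵢxⱼ` (`i < j`), and one for each
linear term `xᵢ`. -/
abbrev QIdx (d : ℕ) : Type :=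
  Fin d ⊕ ({p : Fin d × Fin d // p.1 < p.2} ⊕ Fin d)

/-- The map `φ : ℝ^d → ℝ^B` sending `x` to
`(x₁², …, x_d², x₁x₂, …, x_{d-1}x_d, x₁, …, x_d)`. -/
def phi {d : ℕ} (x : Fin d → ℝ) : QIdx d → ℝ :=
  Sum.elim (fun i => x i ^ 2)
    (Sum.elim (fun p => x p.1.1 * x p.1.2) (fun i => x i))

theorem Pi.single_mem_of_single_mem {K ι : Type*} [Field K] [DecidableEq ι]
    {W : Submodule K (ι → K)} {q : ι} {c : K} (hc : c ≠ 0) (h : Pi.single q c ∈ W) (t : K) :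
    Pi.single q t ∈ W := by
  have : Pi.single q t = (t / c) • Pi.single q c := by
    rw [← Pi.single_smul', smul_eq_mul, div_mul_cancel₀ _ hc]
  exact this ▸ W.smul_mem _ h

theorem mem_affineSpan_iff_of_vectorSpan_eq_ker {k V W : Type*} [Ring k] [AddCommGroup V]
    [Module k V] [AddCommGroup W] [Module k W] {s : Set V} {f : V →ₗ[k] W} {p : V}
    (hp : p ∈ s) (hs : vectorSpan k s = LinearMap.ker f) (v : V) :
    v ∈ affineSpan k s ↔ f v = f p := by
  rw [← AffineSubspace.vsub_right_mem_direction_iff_mem (mem_affineSpan k hp),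
    direction_affineSpan, hs, LinearMap.mem_ker, vsub_eq_sub, map_sub, sub_eq_zero]

section SumSquares

variable {ι : Type*} [Fintype ι] [DecidableEq ι]

theorem sum_sq_single (i : ι) (t : ℝ) : ∑ k, (Pi.single i t : ι → ℝ) k ^ 2 = t ^ 2 := by
  rw [Fintype.sum_eq_single i fun k hk => by simp [hk]]
  simp

theorem sum_sq_single_add_single {i j : ι} (hij : i ≠ j) (a b : ℝ) :
    ∑ k, (Pi.single i a + Pi.single j b : ι → ℝ) k ^ 2 = a ^ 2 + b ^ 2 := by
  rw [Fintype.sum_eq_add i j hij fun k hk => by simp [hk.1, hk.2]]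
  simp [hij, hij.symm]

end SumSquares

theorem card_QIdx (d : ℕ) : Fintype.card (QIdx d) = (d ^ 2 + 3 * d) / 2 := by
  have hpairs : Fintype.card {p : Fin d × Fin d // p.1 < p.2} = d.choose 2 := by
    rw [Fintype.card_subtype, Fintype.card_product_filter_lt, Fintype.card_fin]
  have htwice : d.choose 2 * 2 = d * (d - 1) := by
    rw [Nat.choose_two_right, Nat.div_mul_cancel (Nat.even_mul_pred_self d).two_dvd]
  simp only [Fintype.card_sum, Fintype.card_fin, hpairs]
  rcases d with _ | d
  · rfl
  · rw [Nat.add_sub_cancel] at htwice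
    rw [Nat.div_eq_of_eq_mul_left two_pos]
    nlinarith

def unitSphere (d : ℕ) : Set (Fin d → ℝ) := {x | ∑ i, x i ^ 2 = 1}

noncomputable def squareCoordSum (d : ℕ) : (QIdx d → ℝ) →ₗ[ℝ] ℝ :=
  ∑ i, LinearMap.proj (Sum.inl i)

section Phi

variable {d : ℕ}

@[simp] theorem squareCoordSum_apply (ξ : QIdx d → ℝ) :
    squareCoordSum d ξ = ∑ i, ξ (Sum.inl i) := by
  simp [squareCoordSum]

@[simp] theorem squareCoordSum_phi (x : Fin d → ℝ) : squareCoordSum d (phi x) = ∑ i, x i ^ 2 := by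
  simp [phi]

theorem single_mem_unitSphere (i : Fin d) {t : ℝ} (ht : t ^ 2 = 1) :
    Pi.single i t ∈ unitSphere d := by
  rw [unitSphere, Set.mem_ofPred_eq, sum_sq_single, ht]

theorem single_add_single_mem_unitSphere {i j : Fin d} (hij : i ≠ j) {a b : ℝ}
    (hab : a ^ 2 + b ^ 2 = 1) : Pi.single i a + Pi.single j b ∈ unitSphere d := by
  rw [unitSphere, Set.mem_ofPred_eq, sum_sq_single_add_single hij, hab]

theorem phi_single (i : Fin d) (t : ℝ) :
    phi (Pi.single i t) = Pi.single (Sum.inl i) (t ^ 2) + Pi.single (Sum.inr (Sum.inr i)) t := by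
  funext q
  rcases q with k | ⟨⟨k, l⟩, hkl⟩ | k
  · by_cases h : k = i <;> simp [phi, h]
  · have : ¬(k = i ∧ l = i) := fun h => hkl.ne (h.1.trans h.2.symm)
    simp only [phi, Sum.elim_inr, Sum.elim_inl, Pi.add_apply, Pi.single_apply]
    split_ifs <;> simp_all
  · by_cases h : k = i <;> simp [phi, h]

theorem phi_single_add_single {i j : Fin d} (hij : i < j) (a b : ℝ) :
    phi (Pi.single i a + Pi.single j b) =
      Pi.single (Sum.inl i) (a ^ 2) + Pi.single (Sum.inl j) (b ^ 2) +
        Pi.single (Sum.inr (Sum.inl ⟨(i, j), hij⟩)) (a * b) +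
        Pi.single (Sum.inr (Sum.inr i)) a + Pi.single (Sum.inr (Sum.inr j)) b := by
  funext q
  rcases q with k | ⟨⟨k, l⟩, hkl⟩ | k
  · simp only [phi, Sum.elim_inl, Pi.add_apply, Pi.single_apply]
    split_ifs <;> simp_all [hij.ne']
  · have hkl' : k < l := hkl
    simp only [phi, Sum.elim_inr, Sum.elim_inl, Pi.add_apply, Pi.single_apply]
    split_ifs <;> simp_all [hij.ne, hij.ne', lt_asymm hij]
  · simp only [phi, Sum.elim_inr, Pi.add_apply, Pi.single_apply]
    split_ifs <;> simp_all [hij.ne']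

theorem phi_sub_phi_mem_vectorSpan {x y : Fin d → ℝ} (hx : x ∈ unitSphere d)
    (hy : y ∈ unitSphere d) : phi x - phi y ∈ vectorSpan ℝ (phi '' unitSphere d) :=
  vsub_mem_vectorSpan ℝ (Set.mem_image_of_mem _ hx) (Set.mem_image_of_mem _ hy)

theorem single_inr_inr_mem_vectorSpan (i : Fin d) (t : ℝ) :
    Pi.single (Sum.inr (Sum.inr i)) t ∈ vectorSpan ℝ (phi '' unitSphere d) := by
  have key : phi (Pi.single i 1) - phi (Pi.single i (-1)) =
      Pi.single (Sum.inr (Sum.inr i)) 2 := by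
    rw [phi_single, phi_single, neg_one_sq, one_pow, add_sub_add_left_eq_sub, ← Pi.single_sub]
    norm_num
  refine Pi.single_mem_of_single_mem two_ne_zero ?_ t
  exact key ▸ phi_sub_phi_mem_vectorSpan (single_mem_unitSphere i (one_pow 2))
    (single_mem_unitSphere i neg_one_sq)

theorem single_inl_sub_single_inl_mem_vectorSpan (i j : Fin d) (t : ℝ) :
    Pi.single (Sum.inl i) t - Pi.single (Sum.inl j) t ∈ vectorSpan ℝ (phi '' unitSphere d) := by
  have key : Pi.single (Sum.inl i) t - Pi.single (Sum.inl j) t =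
      t • ((phi (Pi.single i 1) - phi (Pi.single j 1)) -
        (Pi.single (Sum.inr (Sum.inr i)) 1 - Pi.single (Sum.inr (Sum.inr j)) 1)) := by
    rw [phi_single, phi_single, add_sub_add_comm, add_sub_cancel_right, one_pow, smul_sub,
      ← Pi.single_smul', ← Pi.single_smul', smul_eq_mul, mul_one]
  rw [key]
  exact Submodule.smul_mem _ _ (sub_mem
    (phi_sub_phi_mem_vectorSpan (single_mem_unitSphere i (one_pow 2))
      (single_mem_unitSphere j (one_pow 2)))
    (sub_mem (single_inr_inr_mem_vectorSpan i 1) (single_inr_inr_mem_vectorSpan j 1)))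

theorem single_inr_inl_mem_vectorSpan (p : {p : Fin d × Fin d // p.1 < p.2}) (t : ℝ) :
    Pi.single (Sum.inr (Sum.inl p)) t ∈ vectorSpan ℝ (phi '' unitSphere d) := by
  obtain ⟨⟨i, j⟩, hij : i < j⟩ := p
  have key : phi (Pi.single i (3 / 5) + Pi.single j (4 / 5)) -
      phi (Pi.single i (3 / 5) + Pi.single j (-(4 / 5))) =
      Pi.single (Sum.inr (Sum.inl ⟨(i, j), hij⟩)) (24 / 25) +
        Pi.single (Sum.inr (Sum.inr j)) (8 / 5) := by
    rw [phi_single_add_single hij, phi_single_add_single hij, neg_sq]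
    ext q
    simp only [Pi.add_apply, Pi.sub_apply, Pi.single_apply]
    split_ifs <;> norm_num
  have hsphere : ∀ b : ℝ, b ^ 2 = (4 / 5) ^ 2 →
      Pi.single i (3 / 5) + Pi.single j b ∈ unitSphere d := fun b hb =>
    single_add_single_mem_unitSphere hij.ne (by rw [hb]; norm_num)
  refine Pi.single_mem_of_single_mem (c := 24 / 25) (by norm_num) ?_ t
  rw [← add_sub_cancel_right (Pi.single _ _) (Pi.single (Sum.inr (Sum.inr j)) (8 / 5)), ← key]
  exact sub_mem (phi_sub_phi_mem_vectorSpan (hsphere _ rfl) (hsphere _ (neg_sq _)))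
    (single_inr_inr_mem_vectorSpan j _)

theorem vectorSpan_phi_unitSphere (hd : 0 < d) :
    vectorSpan ℝ (phi '' unitSphere d) = LinearMap.ker (squareCoordSum d) := by
  apply le_antisymm
  · rw [vectorSpan_def, Submodule.span_le]
    rintro _ ⟨_, ⟨x, hx, rfl⟩, _, ⟨y, hy, rfl⟩, rfl⟩
    simp only [SetLike.mem_coe, LinearMap.mem_ker, vsub_eq_sub, map_sub, squareCoordSum_phi]
    rw [hx, hy, sub_self]
  · intro ξ hξ
    rw [LinearMap.mem_ker, squareCoordSum_apply] at hξ
    let z : Fin d := ⟨0, hd⟩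
    have hsquares : ∑ i, (Pi.single (Sum.inl i) (ξ (Sum.inl i)) : QIdx d → ℝ) =
        ∑ i, (Pi.single (Sum.inl i) (ξ (Sum.inl i)) -
          (Pi.single (Sum.inl z) (ξ (Sum.inl i)) : QIdx d → ℝ)) := by
      rw [Finset.sum_sub_distrib, eq_comm, sub_eq_self]
      exact (map_sum (AddMonoidHom.single (fun _ : QIdx d => ℝ) (Sum.inl z)) _ _).symm.trans
        (by rw [hξ, map_zero])
    rw [← Finset.univ_sum_single ξ, Fintype.sum_sum_type, Fintype.sum_sum_type, hsquares]
    exact add_mem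
      (sum_mem fun i _ => single_inl_sub_single_inl_mem_vectorSpan i z _)
      (add_mem (sum_mem fun p _ => single_inr_inl_mem_vectorSpan p _)
        (sum_mem fun i _ => single_inr_inr_mem_vectorSpan i _))

end Phi

theorem affineSpan_phi_sphere (d : ℕ) (hd : 0 < d) :
    Fintype.card (QIdx d) = (d ^ 2 + 3 * d) / 2 ∧
    (affineSpan ℝ (phi '' {x : Fin d → ℝ | ∑ i, x i ^ 2 = 1}) : Set (QIdx d → ℝ)) =
      {ξ : QIdx d → ℝ | ∑ i, ξ (Sum.inl i) = 1} := by
  refine ⟨card_QIdx d, Set.ext fun ξ => ?_⟩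
  have hbase : Pi.single (⟨0, hd⟩ : Fin d) 1 ∈ unitSphere d :=
    single_mem_unitSphere _ (one_pow 2)
  have hspan := mem_affineSpan_iff_of_vectorSpan_eq_ker (Set.mem_image_of_mem phi hbase)
    (vectorSpan_phi_unitSphere hd) ξ
  rwa [squareCoordSum_phi, squareCoordSum_apply, hbase.out] at hspan
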